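/- arXiv:1706.08472 — 5 statements merged into one kernel-verified Lean document; each statement's English description precedes it below -/
import Mathlib

section
/- Let S̄ = {(b,c,d) ∈ ℤ³ : b² − 3c ≤ 0, d < 0, 1 + b + c + d > 0}. If (b,c,d) ∈ S̄ and the associated root α satisfies α ∈ (1/2, 1), then (2b + 3, 4b + 4c + 3, 2b + 4c + 8d + 1) ∈ S̄. -/
def Sbar : Set (ℤ × ℤ × ℤ) :=
  {p | p.1^2 - 3*p.2.1 ≤ 0 ∧ p.2.2 < 0 ∧ 1 + p.1 + p.2.1 + p.2.2 > 0}

theorem right_branch_maps_into_Sbar (b c d : ℤ) (h : (b, c, d) ∈ Sbar)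
    (α : ℝ) (hα : α ∈ Set.Ioo (1/2 : ℝ) 1)
    (hroot : α^3 + b*α^2 + c*α + d = 0) :
    (2*b + 3, 4*b + 4*c + 3, 2*b + 4*c + 8*d + 1) ∈ Sbar := by
  obtain ⟨h1, h2, h3⟩ := h
  simp only [Sbar, Set.mem_setOf_eq] at *
  obtain ⟨ha1, ha2⟩ := hα
  refine ⟨by nlinarith [sq_nonneg b], ?_, by linarith⟩
  have h1' : (b:ℝ)^2 - 3*c ≤ 0 := by exact_mod_cast h1
  have hQ : α^2 + ((b:ℝ)+1/2)*α + c + b/2 + 1/4 > 0 := by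
    nlinarith [sq_nonneg (2*(b:ℝ)+3*α+3/2), mul_pos (sub_pos.mpr ha1) (sub_pos.mpr ha1)]
  have key : (1:ℝ) + 2*b + 4*c + 8*d < 0 := by
    nlinarith [mul_pos (sub_pos.mpr ha1) hQ]
  have : (1 + 2*b + 4*c + 8*d : ℤ) < 0 := by exact_mod_cast key
  linarith
end

section
/- The coefficient map M̄_B on S̄ is injective: if (b₁,c₁,d₁), (b₂,c₂,d₂) ∈ S̄ have the same image under M̄_B, then (b₁,c₁,d₁) = (b₂,c₂,d₂). In particular, the image under the even branch has b' even, while the image under the odd branch has b' odd, so the branches are distinguishable. -/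
def MB : ℤ × ℤ × ℤ → ℤ × ℤ × ℤ := fun p =>
  if 1 + 2*p.1 + 4*p.2.1 + 8*p.2.2 > 0 then
    (2*p.1, 4*p.2.1, 8*p.2.2)
  else
    (2*p.1 + 3, 4*p.1 + 4*p.2.1 + 3, 2*p.1 + 4*p.2.1 + 8*p.2.2 + 1)

theorem MB_injective_on_Sbar :
    (∀ p ∈ Sbar, ∀ q ∈ Sbar, MB p = MB q → p = q) ∧
    (∀ p : ℤ × ℤ × ℤ, (1 + 2*p.1 + 4*p.2.1 + 8*p.2.2 > 0 → Even (MB p).1) ∧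
      (1 + 2*p.1 + 4*p.2.1 + 8*p.2.2 < 0 → Odd (MB p).1)) := by
  constructor
  · rintro ⟨a, b, c⟩ _ ⟨x, y, z⟩ _ h
    simp only [MB] at h
    split_ifs at h <;>
      (simp only [Prod.mk.injEq] at h ⊢; omega)
  · intro p
    refine ⟨fun h => ?_, fun h => ?_⟩
    · simp only [MB, if_pos h]; exact ⟨p.1, by ring⟩
    · have h' : ¬ (1 + 2*p.1 + 4*p.2.1 + 8*p.2.2 > 0) := by omega
      simp only [MB, if_neg h']; exact ⟨p.1 + 1, by ring⟩
end

section
/- A triple (b,c,d) ∈ S̄ has no preimage in S̄ under M̄_B if and only if one of the following holds: (i) b, c, d are neither all even nor all odd; (ii) b, c, d are all even but c ≢ 0 (mod 4) or d ≢ 0 (mod 8); (iii) b, c, d are all odd but −2b + c ≢ 1 (mod 4) or b − c + d ≢ 1 (mod 8). -/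
lemma preimage_iff (b c d : ℤ) (h : (b, c, d) ∈ Sbar) :
    (∃ q ∈ Sbar, MB q = (b, c, d)) ↔
      ((2 ∣ b ∧ 4 ∣ c ∧ 8 ∣ d) ∨
       (¬ 2 ∣ b ∧ 4 ∣ (-2*b + c - 1) ∧ 8 ∣ (b - c + d - 1))) := by
  obtain ⟨h1, h2, h3⟩ := h
  simp only [gt_iff_lt] at h1 h2 h3 ⊢
  constructor
  · rintro ⟨⟨x, y, z⟩, ⟨hq1, hq2, hq3⟩, hm⟩
    simp only [MB] at hm
    split_ifs at hm with hc
    · obtain ⟨e1, e2, e3⟩ := Prod.mk.injEq .. ▸ hm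
      simp only [Prod.mk.injEq] at hm
      left
      omega
    · simp only [Prod.mk.injEq] at hm
      right
      omega
  · have hb2 : b^2 ≤ 3*c := by nlinarith
    rintro (⟨⟨x, hx⟩, ⟨y, hy⟩, ⟨z, hz⟩⟩ | ⟨hb, ⟨y, hy⟩, ⟨z, hz⟩⟩)
    · refine ⟨(x, y, z), ⟨?_, by dsimp only; omega, ?_⟩, ?_⟩
      · dsimp only; nlinarith
      · dsimp only; nlinarith [sq_nonneg (4*x + 9)]
      · simp only [MB]
        rw [if_pos (by omega)]
        simp only [Prod.mk.injEq]; omega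
    · -- b odd
      obtain ⟨k, hk⟩ : ∃ k, b = 2*k + 3 := ⟨(b-3)/2, by omega⟩
      -- c ≥ b
      have hcb : b ≤ c := by nlinarith [sq_nonneg (2*b - 3)]
      refine ⟨(k, y + 1, z), ⟨?_, by dsimp only; omega, ?_⟩, ?_⟩
      · dsimp only; nlinarith
      · dsimp only; nlinarith
      · simp only [MB]
        rw [if_neg (by omega)]
        simp only [Prod.mk.injEq]; omega

theorem source_point_characterization (b c d : ℤ) (h : (b, c, d) ∈ Sbar) :
    (¬ ∃ q ∈ Sbar, MB q = (b, c, d)) ↔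
      (¬ (Even b ∧ Even c ∧ Even d) ∧ ¬ (Odd b ∧ Odd c ∧ Odd d)) ∨
      ((Even b ∧ Even c ∧ Even d) ∧ (¬ (4 ∣ c) ∨ ¬ (8 ∣ d))) ∨
      ((Odd b ∧ Odd c ∧ Odd d) ∧
        (¬ (-2*b + c ≡ 1 [ZMOD 4]) ∨ ¬ (b - c + d ≡ 1 [ZMOD 8]))) := by
  rw [preimage_iff b c d h]
  simp only [Int.even_iff, Int.odd_iff, Int.ModEq]
  omega
end

section
/- A triple (b,c,d) ∈ S̄ with b, c, d all even has a preimage in S̄ under M̄_B if and only if c ≡ 0 (mod 4) and d ≡ 0 (mod 8); in that case the preimage is (b/2, c/4, d/8). -/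
theorem even_preimage (b c d : ℤ) (h : (b, c, d) ∈ Sbar)
    (heb : Even b) (hec : Even c) (hed : Even d) :
    ((∃ q ∈ Sbar, MB q = (b, c, d)) ↔ (4 ∣ c ∧ 8 ∣ d)) ∧
    (∀ q ∈ Sbar, MB q = (b, c, d) → q = (b / 2, c / 4, d / 8)) := by
  obtain ⟨h1, h2, h3⟩ := h
  simp only [Sbar, Set.mem_setOf_eq] at h1 h2 h3 ⊢
  obtain ⟨k, hk⟩ := heb
  constructor
  · constructor
    · rintro ⟨⟨x, y, z⟩, ⟨hq1, hq2, hq3⟩, hMB⟩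
      simp only at hq1 hq2 hq3
      simp only [MB, Prod.mk.injEq] at hMB
      split_ifs at hMB with hcond
      · obtain ⟨e1, e2, e3⟩ := hMB
        exact ⟨⟨y, by omega⟩, ⟨z, by omega⟩⟩
      · obtain ⟨e1, e2, e3⟩ := hMB
        omega
    · rintro ⟨⟨c4, hc4⟩, ⟨d8, hd8⟩⟩
      refine ⟨(k, c4, d8), ⟨?_, ?_, ?_⟩, ?_⟩
      · show k^2 - 3*c4 ≤ 0
        nlinarith
      · show d8 < 0
        omega
      · show 1 + k + c4 + d8 > 0
        nlinarith [sq_nonneg (2*b+9)]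
      · simp only [MB]
        rw [if_pos (by omega)]
        simp only [Prod.mk.injEq]
        omega
  · rintro ⟨x, y, z⟩ ⟨hq1, hq2, hq3⟩ hMB
    simp only [Sbar, Set.mem_setOf_eq] at hq1 hq2 hq3
    simp only [MB, Prod.mk.injEq] at hMB
    split_ifs at hMB with hcond
    · obtain ⟨e1, e2, e3⟩ := hMB
      simp only [Prod.mk.injEq]
      omega
    · obtain ⟨e1, e2, e3⟩ := hMB
      omega
end

section
/- A triple (b',c',d') ∈ S̄ with b', c', d' all odd has a preimage in S̄ under M̄_B if and only if −2b' + c' ≡ 1 (mod 4) and b' − c' + d' ≡ 1 (mod 8); in that case the preimage (b,c,d) satisfies b = (b'−3)/2, c = (c' − 4b − 3)/4, d = (d' − 2b − 4c − 1)/8. -/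
theorem odd_preimage (b' c' d' : ℤ) (h : (b', c', d') ∈ Sbar)
    (hob : Odd b') (hoc : Odd c') (hod : Odd d') :
    ((∃ q ∈ Sbar, MB q = (b', c', d')) ↔
      ((-2*b' + c' ≡ 1 [ZMOD 4]) ∧ (b' - c' + d' ≡ 1 [ZMOD 8]))) ∧
    (∀ b c d : ℤ, (b, c, d) ∈ Sbar → MB (b, c, d) = (b', c', d') →
      b = (b' - 3) / 2 ∧ c = (c' - 4*b - 3) / 4 ∧ d = (d' - 2*b - 4*c - 1) / 8) := by
  obtain ⟨h1, h2, h3⟩ := h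
  simp only [Sbar, Set.mem_setOf_eq] at h1 h2 h3 ⊢
  obtain ⟨kb, hkb⟩ := hob
  constructor
  · constructor
    · rintro ⟨⟨b, c, d⟩, ⟨hs1, hs2, hs3⟩, hM⟩
      simp only [Sbar, Set.mem_setOf_eq] at hs1 hs2 hs3
      by_cases hbr : 1 + 2*b + 4*c + 8*d > 0
      · simp only [MB, if_pos hbr, Prod.mk.injEq] at hM
        omega
      · simp only [MB, if_neg hbr, Prod.mk.injEq] at hM
        obtain ⟨e1, e2, e3⟩ := hM
        rw [Int.ModEq, Int.ModEq]
        omega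
    · rintro ⟨hc4, hc8⟩
      rw [Int.ModEq] at hc4 hc8
      obtain ⟨m, hm⟩ : (4 : ℤ) ∣ (-2*b' + c' - 1) := by omega
      obtain ⟨n, hn⟩ : (8 : ℤ) ∣ (b' - c' + d' - 1) := by omega
      refine ⟨(kb - 1, 1 + m, n), ⟨?_, ?_, ?_⟩, ?_⟩
      · show (kb - 1)^2 - 3*(1 + m) ≤ 0
        have e1 : b' = 2*(kb-1) + 3 := by omega
        have e2 : c' = 4*(kb-1) + 4*(1+m) + 3 := by omega
        rw [e1, e2] at h1
        nlinarith [h1]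
      · show n < 0
        have hb'c' : 3*(b' - 1) ≤ 3*c' := by nlinarith [sq_nonneg (2*b' - 3), h1]
        omega
      · show 1 + (kb - 1) + (1 + m) + n > 0
        omega
      · have hbr : ¬ (1 + 2*(kb-1) + 4*(1+m) + 8*n > 0) := by
          have hb'c' : 3*(b' - 1) ≤ 3*c' := by nlinarith [sq_nonneg (2*b' - 3), h1]
          omega
        show MB (kb - 1, 1 + m, n) = (b', c', d')
        unfold MB
        split_ifs with hpos
        · exact absurd hpos hbr
        · simp only [Prod.mk.injEq]
          refine ⟨by omega, by omega, by omega⟩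
  · rintro b c d ⟨hs1, hs2, hs3⟩ hM
    by_cases hbr : 1 + 2*b + 4*c + 8*d > 0
    · simp only [MB, if_pos hbr, Prod.mk.injEq] at hM
      omega
    · simp only [MB, if_neg hbr, Prod.mk.injEq] at hM
      obtain ⟨e1, e2, e3⟩ := hM
      omega
end
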